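/- In the binary cycle setting with Q = Π_i χ̆_i/√((1-m̆_i²)(1-m̆_{i+1}²)), the exact magnetization of the factorized measure P(s) = (1/(1+Q)) Π_i b_i(s_i,s_{i+1})/b_i(s_i) satisfies m_i = E_P[s_i] = ((1-Q)/(1+Q)) m̆_i for every i. -/

import Mathlib

/-!
Since `bP m₁ m₂ χ s t = bS m₁ s * bS m₂ t + χ s t / 4`, each factor of `P` is
`bS(m_{i+1}, s_{i+1}) + (χ_i / 4) (s_i / bS(m_i, s_i)) s_{i+1}`. Expanding the product over the
cycle into a sum over edge subsets `S` and summing over the spins, each term factorizes over the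
vertices. A vertex touched by exactly one edge of `S` contributes `∑_s s = 0` (or
`∑_s (s / bS) bS = 0`), so, away from the observed vertex `i`, only `S = ∅` and `S` = all edges
survive. They give `m_i` and `-m_i ∏ χ_j / (1 - m_j²)`, and since each `1 - m_j²` occurs twice
under the square roots in `Q`, this product is exactly `Q`.
-/

open scoped BigOperators

/-- The value ±1 of an Ising spin encoded by a Boolean. -/
noncomputable def spin (t : Bool) : ℝ := if t then 1 else -1

/-- Single-site BP belief with magnetization `m`. -/
noncomputable def bS (m s : ℝ) : ℝ := (1 + m * s) / 2

/-- Pairwise BP belief with magnetizations `m1, m2` and susceptibility `χ`. -/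
noncomputable def bP (m1 m2 χ s t : ℝ) : ℝ :=
  (1 + m1 * s + m2 * t + (m1 * m2 + χ) * s * t) / 4

open Finset

open Fin.NatCast in
theorem Finset.eq_empty_or_eq_univ_of_sub_one_mem_iff {n : ℕ} [NeZero n] {S : Finset (Fin n)}
    (i : Fin n) (h : ∀ j ≠ i, j - 1 ∈ S ↔ j ∈ S) : S = ∅ ∨ S = univ := by
  have hconst : ∀ k : ℕ, i + k ∈ S ↔ i ∈ S := by
    intro k
    induction k with
    | zero => simp
    | succ k ih =>
      by_cases hk : i + ((k + 1 : ℕ) : Fin n) = i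
      · rw [hk]
      · rw [← h _ hk, ← ih, Nat.cast_succ, ← add_assoc, add_sub_cancel_right]
  have hall : ∀ j, j ∈ S ↔ i ∈ S := fun j => by simpa using hconst (j - i).val
  by_cases hi : i ∈ S
  · exact Or.inr (eq_univ_of_forall fun j => (hall j).2 hi)
  · exact Or.inl (eq_empty_of_forall_notMem fun j hj => hi ((hall j).1 hj))

theorem prod_sqrt_mul_succ {n : ℕ} [NeZero n] (c : Fin n → ℝ) (hc : ∀ j, 0 ≤ c j) :
    ∏ j, √(c j * c (j + 1)) = ∏ j, c j := by
  simp_rw [Real.sqrt_mul (hc _)]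
  rw [prod_mul_distrib,
    Fintype.prod_equiv (Equiv.addRight 1) (fun j => √(c (j + 1))) (fun j => √(c j)) fun _ => rfl,
    ← prod_mul_distrib]
  exact prod_congr rfl fun j _ => Real.mul_self_sqrt (hc j)

section CycleExpansion

variable {n : ℕ} [NeZero n] {α R : Type*} [Fintype α] [CommSemiring R]

-- `S` is the set of edges `j → j + 1` on which the `κ`-term is chosen: vertex `j` picks up `u j`
-- as the tail of edge `j` and `v j` as the head of edge `j - 1`.
theorem sum_prod_cycle_eq_sum_finset (w a u v : Fin n → α → R) (κ : Fin n → R) :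
    ∑ σ : Fin n → α, (∏ j, w j (σ j)) *
        ∏ j, (κ j * (u j (σ j) * v (j + 1) (σ (j + 1))) + a (j + 1) (σ (j + 1))) =
      ∑ S : Finset (Fin n), (∏ j ∈ S, κ j) * ∏ j, ∑ x, w j x *
        ((if j ∈ S then u j x else 1) * if j - 1 ∈ S then v j x else a j x) := by
  have hterm : ∀ σ : Fin n → α, (∏ j, w j (σ j)) *
      ∏ j, (κ j * (u j (σ j) * v (j + 1) (σ (j + 1))) + a (j + 1) (σ (j + 1))) =
      ∑ S : Finset (Fin n), (∏ j ∈ S, κ j) * ∏ j, w j (σ j) *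
        ((if j ∈ S then u j (σ j) else 1) * if j - 1 ∈ S then v j (σ j) else a j (σ j)) := by
    intro σ
    rw [prod_add, powerset_univ, mul_sum]
    refine sum_congr rfl fun S _ => ?_
    have hshift : ∏ j, (if j - 1 ∈ S then v j (σ j) else a j (σ j)) =
        (∏ j ∈ S, v (j + 1) (σ (j + 1))) * ∏ j ∈ univ \ S, a (j + 1) (σ (j + 1)) := by
      have hsplit := prod_piecewise univ S (fun j => v (j + 1) (σ (j + 1)))
        fun j => a (j + 1) (σ (j + 1))
      rw [univ_inter] at hsplit
      rw [← hsplit]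
      exact Fintype.prod_equiv (Equiv.subRight 1) _ _ fun j => by simp [piecewise]
    simp only [prod_mul_distrib, hshift, prod_ite_mem, univ_inter]
    ring
  simp_rw [hterm]
  rw [sum_comm]
  refine sum_congr rfl fun S _ => ?_
  rw [← mul_sum, Fintype.prod_sum]

theorem sum_prod_cycle_eq_of_sum_eq_zero (w a u v : Fin n → α → R) (κ : Fin n → R) (i : Fin n)
    (hua : ∀ j ≠ i, ∑ x, w j x * (u j x * a j x) = 0) (hv : ∀ j ≠ i, ∑ x, w j x * v j x = 0) :
    ∑ σ : Fin n → α, (∏ j, w j (σ j)) *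
        ∏ j, (κ j * (u j (σ j) * v (j + 1) (σ (j + 1))) + a (j + 1) (σ (j + 1))) =
      ∏ j, ∑ x, w j x * a j x + ∏ j, κ j * ∑ x, w j x * (u j x * v j x) := by
  rw [sum_prod_cycle_eq_sum_finset]
  have hmixed : ∀ S ∈ (univ : Finset (Finset (Fin n))), S ∉ ({∅, univ} : Finset _) →
      (∏ j ∈ S, κ j) * ∏ j, ∑ x, w j x *
        ((if j ∈ S then u j x else 1) * if j - 1 ∈ S then v j x else a j x) = 0 := by
    intro S _ hS
    simp only [mem_insert, mem_singleton, not_or] at hS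
    obtain ⟨j, hji, hj⟩ : ∃ j ≠ i, ¬(j - 1 ∈ S ↔ j ∈ S) := by
      by_contra! hc
      exact (eq_empty_or_eq_univ_of_sub_one_mem_iff i hc).elim hS.1 hS.2
    refine mul_eq_zero_of_right _ (prod_eq_zero (mem_univ j) ?_)
    by_cases hjS : j ∈ S
    · simpa [hjS, show j - 1 ∉ S by tauto] using hua j hji
    · simpa [hjS, show j - 1 ∈ S by tauto] using hv j hji
  rw [← sum_subset (subset_univ _) hmixed, sum_pair univ_nonempty.ne_empty.symm, prod_mul_distrib]
  simp

end CycleExpansion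

theorem bP_eq (m₁ m₂ χ s t : ℝ) : bP m₁ m₂ χ s t = bS m₁ s * bS m₂ t + χ / 4 * (s * t) := by
  simp only [bP, bS]
  ring

theorem bP_div_bS {m₁ m₂ χ s t : ℝ} (h : bS m₁ s ≠ 0) :
    bP m₁ m₂ χ s t / bS m₁ s = χ / 4 * (s / bS m₁ s * t) + bS m₂ t := by
  rw [bP_eq]
  field_simp
  ring

section SpinMoments

variable {m : ℝ}

theorem one_add_ne_zero_and_one_sub_ne_zero (hm : m ^ 2 ≠ 1) : 1 + m ≠ 0 ∧ 1 - m ≠ 0 := by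
  obtain ⟨h₁, h₂⟩ := sq_ne_one_iff.1 hm
  exact ⟨fun h => h₂ (by linarith), fun h => h₁ (by linarith)⟩

theorem bS_spin_ne_zero (hm : m ^ 2 ≠ 1) (b : Bool) : bS m (spin b) ≠ 0 := by
  obtain ⟨h₁, h₂⟩ := one_add_ne_zero_and_one_sub_ne_zero hm
  cases b <;> simp only [bS, spin, Bool.false_eq_true, ↓reduceIte] <;> intro hb
  · exact h₂ (by linarith)
  · exact h₁ (by linarith)

theorem sum_bS_spin (m : ℝ) : ∑ b, bS m (spin b) = 1 := by
  simp only [Fintype.sum_bool, bS, spin, Bool.false_eq_true, ↓reduceIte]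
  ring

theorem sum_spin : ∑ b, spin b = 0 := by
  simp [spin]

theorem sum_spin_mul_bS_spin (m : ℝ) : ∑ b, spin b * bS m (spin b) = m := by
  simp only [Fintype.sum_bool, bS, spin, Bool.false_eq_true, ↓reduceIte]
  ring

theorem sum_spin_div_bS_mul_spin (hm : m ^ 2 ≠ 1) :
    ∑ b, spin b / bS m (spin b) * spin b = 4 / (1 - m ^ 2) := by
  obtain ⟨h₁, h₂⟩ := one_add_ne_zero_and_one_sub_ne_zero hm
  have h : 1 - m ^ 2 ≠ 0 := sub_ne_zero.2 hm.symm
  simp only [Fintype.sum_bool, bS, spin, Bool.false_eq_true, ↓reduceIte, mul_one, mul_neg,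
    ← sub_eq_add_neg]
  field_simp
  ring

theorem sum_spin_mul_spin_div_bS_mul_spin (hm : m ^ 2 ≠ 1) :
    ∑ b, spin b * (spin b / bS m (spin b) * spin b) = -m * (4 / (1 - m ^ 2)) := by
  obtain ⟨h₁, h₂⟩ := one_add_ne_zero_and_one_sub_ne_zero hm
  have h : 1 - m ^ 2 ≠ 0 := sub_ne_zero.2 hm.symm
  simp only [Fintype.sum_bool, bS, spin, Bool.false_eq_true, ↓reduceIte, mul_one, mul_neg,
    ← sub_eq_add_neg]
  field_simp
  ring

end SpinMoments

theorem sum_spin_mul_prod_bP_div_bS {n : ℕ} [NeZero n] (m χ : Fin n → ℝ)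
    (hm : ∀ j, m j ^ 2 ≠ 1) (i : Fin n) :
    ∑ σ : Fin n → Bool, spin (σ i) *
        ∏ j, bP (m j) (m (j + 1)) (χ j) (spin (σ j)) (spin (σ (j + 1))) / bS (m j) (spin (σ j)) =
      (1 - ∏ j, χ j / (1 - m j ^ 2)) * m i := by
  let w : Fin n → Bool → ℝ := fun j b => if j = i then spin b else 1
  have hobs : ∀ σ : Fin n → Bool, spin (σ i) = ∏ j, w j (σ j) := fun σ => by simp [w]
  simp_rw [hobs, bP_div_bS (bS_spin_ne_zero (hm _) _)]
  rw [sum_prod_cycle_eq_of_sum_eq_zero w (fun j b => bS (m j) (spin b))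
    (fun j b => spin b / bS (m j) (spin b)) (fun _ => spin) (fun j => χ j / 4) i
    (fun j hj => by
      simp only [w, if_neg hj, one_mul, div_mul_cancel₀ _ (bS_spin_ne_zero (hm j) _), sum_spin])
    (fun j hj => by simp only [w, if_neg hj, one_mul, sum_spin])]
  have hempty : ∀ j, ∑ b, w j b * bS (m j) (spin b) = if j = i then m i else 1 := fun j => by
    by_cases hj : j = i
    · simp only [w, hj, ↓reduceIte, sum_spin_mul_bS_spin]
    · simp only [w, hj, ↓reduceIte, one_mul, sum_bS_spin]
  have hfull : ∀ j, χ j / 4 * ∑ b, w j b * (spin b / bS (m j) (spin b) * spin b) =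
      (if j = i then -m i else 1) * (χ j / (1 - m j ^ 2)) := fun j => by
    by_cases hj : j = i
    · subst hj
      simp only [w, ↓reduceIte, sum_spin_mul_spin_div_bS_mul_spin (hm j)]
      ring
    · simp only [w, hj, ↓reduceIte, one_mul, sum_spin_div_bS_mul_spin (hm j)]
      ring
  simp only [hempty, hfull, prod_mul_distrib, prod_ite_eq', mem_univ, ↓reduceIte]
  ring

theorem stmt_7_general (n : ℕ) [NeZero n] (m χ : Fin n → ℝ)
    (hm : ∀ i, |m i| < 1) :
    let Q : ℝ := ∏ i, χ i / Real.sqrt ((1 - (m i) ^ 2) * (1 - (m (i + 1)) ^ 2))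
    let P : (Fin n → Bool) → ℝ := fun σ =>
      (∏ i, bP (m i) (m (i + 1)) (χ i) (spin (σ i)) (spin (σ (i + 1)))
          / bS (m i) (spin (σ i))) / (1 + Q)
    Q ≠ -1 →
    ∀ i : Fin n, (∑ σ : Fin n → Bool, spin (σ i) * P σ) = ((1 - Q) / (1 + Q)) * m i := by
  intro Q P _ i
  have hm2 : ∀ j, m j ^ 2 < 1 := fun j => (sq_lt_one_iff_abs_lt_one _).2 (hm j)
  have hQ : Q = ∏ j, χ j / (1 - m j ^ 2) := by
    simp only [Q, prod_div_distrib, prod_sqrt_mul_succ _ fun j => (sub_pos.2 (hm2 j)).le]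
  calc ∑ σ, spin (σ i) * P σ
      = (∑ σ : Fin n → Bool, spin (σ i) * ∏ j, bP (m j) (m (j + 1)) (χ j) (spin (σ j))
          (spin (σ (j + 1))) / bS (m j) (spin (σ j))) / (1 + Q) := by
        simp only [P, mul_div_assoc, sum_div]
    _ = (1 - Q) / (1 + Q) * m i := by
        rw [sum_spin_mul_prod_bP_div_bS m χ (fun j => (hm2 j).ne), hQ, div_mul_eq_mul_div]

/-- In the binary cycle setting with
`Q = Π_i χ̆_i/√((1-m̆_i²)(1-m̆_{i+1}²))`, the exact magnetization of the factorized
measure `P(s) = (1/(1+Q)) Π_i b_i(s_i,s_{i+1})/b_i(s_i)` satisfies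
`m_i = E_P[s_i] = ((1-Q)/(1+Q)) m̆_i` for every `i`. -/
theorem stmt_7 (n : ℕ) [NeZero n] (m χ : Fin n → ℝ)
    (hm : ∀ i, |m i| < 1)
    (hnn : ∀ (i : Fin n) (s t : Bool),
      0 ≤ bP (m i) (m (i + 1)) (χ i) (spin s) (spin t)) :
    let Q : ℝ := ∏ i, χ i / Real.sqrt ((1 - (m i) ^ 2) * (1 - (m (i + 1)) ^ 2))
    let P : (Fin n → Bool) → ℝ := fun σ =>
      (∏ i, bP (m i) (m (i + 1)) (χ i) (spin (σ i)) (spin (σ (i + 1)))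
          / bS (m i) (spin (σ i))) / (1 + Q)
    Q ≠ -1 →
    ∀ i : Fin n, (∑ σ : Fin n → Bool, spin (σ i) * P σ) = ((1 - Q) / (1 + Q)) * m i :=
  stmt_7_general n m χ hm
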